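/- Let p be an odd prime, e ≥ 1, and 1 ≤ c ≤ p-1. Then f(c·p^e - 1) - f(c·p^{e-1} - 1) ≡ c·(1 - 2^{p-1})·p^{e-1}·f(c·p^{e-1} - 1) (mod p^{e+1}), where f(n) = ∑_{k=0}^{n} C(n,k)^{-1}. -/

import Mathlib

/-!
Pairing the terms `k` and `k + 1` of `f (n + 1)` gives `f (n + 1) = 1 + (n + 2) / (2 (n + 1)) f n`,
which is solved by `f (N - 1) = N / 2 ^ N * T N` with `T N = ∑_{k=1}^{N} 2 ^ k / k`. Put
`m = c p ^ (e - 1)` and `2 ^ (p - 1) = 1 + y`, so that `p ∣ y`. The claim reduces to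
`‖p T (p m) - 2 ^ ((p - 1) m) (1 - m y) T m‖ ≤ p⁻²` in `ℚ_[p]`. The terms of `T (p m)` with
`p ∤ k` add up to `(∑_{t<m} 2 ^ t) T (p - 1)` modulo `p`; those with `p ∣ k` add up to
`p⁻¹ ∑_{j ≤ m} (2 (1 + y)) ^ j / j ≡ p⁻¹ (T m + y ∑_{j ≤ m} 2 ^ j)` modulo `p`. The binomial
theorem gives `p T (p - 1) ≡ -2 y` modulo `p²`, so the two first-order contributions of `y` cancel.
Higher-order terms are small because `v_p(i) ≤ i - 2` for `i ≥ 2` when `p` is odd, and the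
hypothesis `c < p` enters through `‖m‖ ‖T m‖ ≤ 1`.
-/

def f (n : ℕ) : ℚ := ∑ k ∈ Finset.range (n + 1), ((n.choose k : ℚ))⁻¹

open Finset

def twoPowHarmonic (K : Type*) [DivisionRing K] (N : ℕ) : K :=
  ∑ k ∈ range N, 2 ^ (k + 1) / (k + 1)

theorem inv_choose_add_inv_choose_succ {n k : ℕ} (h : k ≤ n) :
    (((n + 1).choose k : ℚ))⁻¹ + (((n + 1).choose (k + 1) : ℚ))⁻¹
      = (n + 2) / (n + 1) * ((n.choose k : ℚ))⁻¹ := by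
  have hc : (n.choose k : ℚ) ≠ 0 := by exact_mod_cast (Nat.choose_pos h).ne'
  have h₁ : (((n + 1).choose k : ℚ))⁻¹ = (n + 1 - k) / ((n + 1) * n.choose k) := by
    have := congrArg (Nat.cast (R := ℚ)) (Nat.choose_mul_succ_eq n k)
    push_cast [Nat.cast_sub (by omega : k ≤ n + 1)] at this
    have hk : (n + 1 - k : ℚ) ≠ 0 := by
      have : (k : ℚ) ≤ n := by exact_mod_cast h
      linarith
    rw [mul_comm, this]
    field_simp
  have h₂ : (((n + 1).choose (k + 1) : ℚ))⁻¹ = (k + 1) / ((n + 1) * n.choose k) := by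
    have := congrArg (Nat.cast (R := ℚ)) (Nat.add_one_mul_choose_eq n k)
    push_cast at this
    rw [this]
    field_simp
  rw [h₁, h₂]
  field_simp
  ring

theorem f_succ (n : ℕ) : f (n + 1) = 1 + (n + 2) / (2 * (n + 1)) * f n := by
  have hpair : ∑ k ∈ range (n + 1),
      ((((n + 1).choose k : ℚ))⁻¹ + (((n + 1).choose (k + 1) : ℚ))⁻¹)
        = (n + 2) / (n + 1) * f n := by
    rw [f, mul_sum]
    exact sum_congr rfl fun k hk => inv_choose_add_inv_choose_succ (mem_range_succ_iff.mp hk)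
  have hlow : ∑ k ∈ range (n + 1), (((n + 1).choose k : ℚ))⁻¹ = f (n + 1) - 1 := by
    rw [f, sum_range_succ _ (n + 1)]
    simp
  have hhigh : ∑ k ∈ range (n + 1), (((n + 1).choose (k + 1) : ℚ))⁻¹ = f (n + 1) - 1 := by
    rw [f, sum_range_succ' _ (n + 1)]
    simp
  rw [sum_add_distrib, hlow, hhigh] at hpair
  field_simp at hpair ⊢
  linear_combination hpair

theorem f_eq_twoPowHarmonic (n : ℕ) :
    f n = (n + 1) / 2 ^ (n + 1) * twoPowHarmonic ℚ (n + 1) := by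
  induction n with
  | zero => simp [f, twoPowHarmonic]
  | succ n ih =>
    rw [f_succ, ih, twoPowHarmonic, twoPowHarmonic, sum_range_succ _ (n + 1)]
    push_cast
    field_simp
    ring

theorem cast_f_pred (K : Type*) [Field K] [CharZero K] {N : ℕ} (hN : 0 < N) :
    (f (N - 1) : K) = N / 2 ^ N * twoPowHarmonic K N := by
  obtain ⟨n, rfl⟩ : ∃ n, N = n + 1 := ⟨N - 1, by omega⟩
  simp [f_eq_twoPowHarmonic, twoPowHarmonic]

theorem Finset.sum_range_mul {M : Type*} [AddCommMonoid M] (g : ℕ → M) (p m : ℕ) :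
    ∑ k ∈ range (p * m), g k = ∑ t ∈ range m, ∑ r ∈ range p, g (p * t + r) := by
  induction m with
  | zero => simp
  | succ m ih => rw [Nat.mul_succ, sum_range_add, ih, sum_range_succ]

theorem twoPowHarmonic_mul (K : Type*) [Field K] {p : ℕ} (hp : 0 < p) (m : ℕ) :
    twoPowHarmonic K (p * m)
      = ∑ t ∈ range m, ∑ r ∈ range (p - 1), (2 : K) ^ (p * t + r + 1) / ((p * t + r : ℕ) + 1)
        + (p : K)⁻¹ * ∑ t ∈ range m, ((2 : K) ^ p) ^ (t + 1) / (t + 1) := by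
  rw [twoPowHarmonic, sum_range_mul, mul_sum, ← sum_add_distrib]
  refine sum_congr rfl fun t _ => ?_
  obtain ⟨q, rfl⟩ : ∃ q, p = q + 1 := ⟨p - 1, by omega⟩
  rw [sum_range_succ, Nat.add_sub_cancel, ← pow_mul]
  congr 1
  rw [← Nat.cast_add_one, show (q + 1) * t + q + 1 = (q + 1) * (t + 1) by ring, Nat.cast_mul,
    Nat.cast_add_one t, ← div_div]
  ring

theorem one_add_pow_sub_one_sub_mul {K : Type*} [Field K] [CharZero K] (y : K) (n : ℕ) :
    (1 + y) ^ (n + 1) - 1 - (n + 1 : ℕ) * y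
      = (n + 1 : ℕ) * ∑ i ∈ range n, (n.choose (i + 1) : K) * y ^ (i + 2) / (i + 2 : ℕ) := by
  rw [add_comm 1 y, add_pow, sum_range_succ', sum_range_succ', mul_sum]
  have hterm : ∀ i ∈ range n,
      y ^ (i + 1 + 1) * 1 ^ (n + 1 - (i + 1 + 1)) * ((n + 1).choose (i + 1 + 1) : K)
        = (n + 1 : ℕ) * ((n.choose (i + 1) : K) * y ^ (i + 2) / (i + 2 : ℕ)) := by
    intro i _
    have h := congrArg (Nat.cast (R := K)) (Nat.add_one_mul_choose_eq n (i + 1))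
    have hi : (i + 2 : K) ≠ 0 := by exact_mod_cast (i + 1).succ_ne_zero
    push_cast at h ⊢
    rw [one_pow, mul_one, ← mul_div_assoc, eq_div_iff hi]
    linear_combination -y ^ (i + 2) * h
  rw [sum_congr rfl hterm]
  simp
  ring

theorem sum_range_neg_two_pow_mul_choose {p : ℕ} (hp : Odd p) :
    ∑ i ∈ range (p - 1), (-2 : ℤ) ^ (i + 1) * p.choose (i + 1) = 2 * (2 ^ (p - 1) - 1) := by
  have h := add_pow (-2 : ℤ) 1 p
  obtain ⟨q, rfl⟩ : ∃ q, p = q + 1 := ⟨p - 1, by have := hp.pos; omega⟩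
  rw [sum_range_succ, sum_range_succ'] at h
  simp only [one_pow, mul_one, Nat.choose_self, Nat.choose_zero_right, Nat.cast_one, pow_zero,
    Nat.add_sub_cancel] at h ⊢
  rw [show (-2 + 1 : ℤ) = -1 by norm_num, hp.neg_one_pow, hp.neg_pow] at h
  linear_combination -h

theorem Int.prime_dvd_neg_one_pow_mul_choose_sub_one {p i : ℕ} (hp : p.Prime) (hi : i < p) :
    (p : ℤ) ∣ (-1) ^ i * (p - 1).choose i - 1 := by
  have h := Int.alternating_sum_range_choose_eq_choose (n := p - 1) (m := i)
  rw [Nat.sub_add_cancel hp.one_le, Finset.sum_range_succ'] at h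
  rw [← h]
  simp only [pow_zero, Nat.choose_zero_right, Nat.cast_one, mul_one, add_sub_cancel_right]
  refine Finset.dvd_sum fun k hk => Dvd.dvd.mul_left ?_ _
  exact_mod_cast hp.dvd_choose_self k.succ_ne_zero (by simp at hk; omega)

theorem IsUltrametricDist.norm_add_le_of_le {S : Type*} [SeminormedAddGroup S]
    [IsUltrametricDist S] {a b : S} {C : ℝ} (ha : ‖a‖ ≤ C) (hb : ‖b‖ ≤ C) : ‖a + b‖ ≤ C :=
  (norm_add_le_max a b).trans (max_le ha hb)

namespace Padic

open IsUltrametricDist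

variable {p : ℕ} [hp : Fact p.Prime]

theorem norm_two_pow_le_one (n : ℕ) : ‖(2 : ℚ_[p]) ^ n‖ ≤ 1 := by
  simpa using norm_natCast_le_one ℚ_[p] (2 ^ n)

theorem norm_two_pow (hp2 : p ≠ 2) (n : ℕ) : ‖(2 : ℚ_[p]) ^ n‖ = 1 := by
  have : ‖((2 : ℕ) : ℚ_[p])‖ = 1 :=
    norm_natCast_eq_one_iff.mpr ((Nat.coprime_primes hp.out Nat.prime_two).mpr hp2)
  rw [norm_pow, ← Nat.cast_ofNat, this, one_pow]

theorem norm_inv_natCast {n : ℕ} (hn : n ≠ 0) :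
    ‖(n : ℚ_[p])⁻¹‖ = (p : ℝ) ^ padicValNat p n := by
  rw [norm_inv, norm_eq_zpow_neg_valuation (by exact_mod_cast hn), valuation_natCast,
    ← zpow_neg, neg_neg, zpow_natCast]

theorem norm_intCast_div_natCast_le {a : ℤ} {b : ℕ} (ha : (p : ℤ) ∣ a) (hb : ¬ p ∣ b) :
    ‖(a : ℚ_[p]) / b‖ ≤ (p : ℝ) ^ (-1 : ℤ) := by
  have hb' : ‖(b : ℚ_[p])‖ = 1 :=
    norm_natCast_eq_one_iff.mpr ((Nat.Prime.coprime_iff_not_dvd hp.out).mpr hb)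
  rw [norm_div, hb', div_one]
  exact (norm_int_le_pow_iff_dvd a 1).mpr (by simpa using ha)

theorem norm_inv_natCast_add_two_le (hp2 : p ≠ 2) (i : ℕ) :
    ‖((i + 2 : ℕ) : ℚ_[p])⁻¹‖ ≤ (p : ℝ) ^ i := by
  set v := padicValNat p (i + 2)
  have hv : 1 + v * 2 ≤ i + 2 := calc
    1 + v * 2 ≤ (1 + 2) ^ v := one_add_le_pow_of_two_add_nonneg (by norm_num) v
    _ ≤ p ^ v := Nat.pow_le_pow_left (by have := hp.out.two_le; omega) v
    _ ≤ i + 2 := Nat.le_of_dvd (by omega) pow_padicValNat_dvd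
  rw [norm_inv_natCast (by omega)]
  exact pow_le_pow_right₀ (by exact_mod_cast hp.out.one_le) (by omega)

theorem norm_twoPowHarmonic_le {m s : ℕ} (h : m < p ^ (s + 1)) :
    ‖twoPowHarmonic ℚ_[p] m‖ ≤ (p : ℝ) ^ s := by
  refine norm_sum_le_of_forall_le_of_nonneg (by positivity) fun k hk => ?_
  have hv : p ^ padicValNat p (k + 1) < p ^ (s + 1) :=
    (Nat.le_of_dvd k.succ_pos pow_padicValNat_dvd).trans_lt (by simp at hk; omega)
  rw [div_eq_mul_inv, ← one_mul ((p : ℝ) ^ s)]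
  refine norm_mul_le_of_le (norm_two_pow_le_one _) ?_
  rw [← Nat.cast_add_one, norm_inv_natCast k.succ_ne_zero]
  exact pow_le_pow_right₀ (by exact_mod_cast hp.out.one_le)
    (Nat.lt_succ_iff.mp ((Nat.pow_lt_pow_iff_right hp.out.one_lt).mp hv))

theorem norm_two_pow_pred_sub_one_le (hp2 : p ≠ 2) :
    ‖(2 : ℚ_[p]) ^ (p - 1) - 1‖ ≤ (p : ℝ) ^ (-1 : ℤ) := by
  have hdvd := Int.prime_dvd_pow_sub_one hp.out (n := 2)
    (Nat.Coprime.isCoprime ((Nat.coprime_primes Nat.prime_two hp.out).mpr hp2.symm))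
  have := (norm_int_le_pow_iff_dvd (p := p) _ 1).mpr (by simpa using hdvd)
  simpa using this

theorem norm_one_add_pow_sub_le (hp2 : p ≠ 2) {y : ℚ_[p]} (hy : ‖y‖ ≤ (p : ℝ) ^ (-1 : ℤ))
    (j : ℕ) : ‖(1 + y) ^ j - 1 - j * y‖ ≤ ‖(j : ℚ_[p])‖ * (p : ℝ) ^ (-2 : ℤ) := by
  rcases j with _ | n
  · simp
  rw [one_add_pow_sub_one_sub_mul, norm_mul]
  refine mul_le_mul_of_nonneg_left ?_ (norm_nonneg _)
  refine norm_sum_le_of_forall_le_of_nonneg (by positivity) fun i _ => ?_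
  have hyi : ‖y ^ (i + 2)‖ ≤ (p : ℝ) ^ (-(i + 2 : ℤ)) := by
    rw [norm_pow, show (-(i + 2 : ℤ)) = (-1) * (i + 2 : ℕ) by push_cast; ring, zpow_mul,
      zpow_natCast]
    exact pow_le_pow_left₀ (norm_nonneg _) hy _
  calc ‖(n.choose (i + 1) : ℚ_[p]) * y ^ (i + 2) / (i + 2 : ℕ)‖
      ≤ 1 * (p : ℝ) ^ (-(i + 2 : ℤ)) * (p : ℝ) ^ i := by
        rw [div_eq_mul_inv]
        exact norm_mul_le_of_le (norm_mul_le_of_le (norm_natCast_le_one _ _) hyi)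
          (norm_inv_natCast_add_two_le hp2 i)
    _ = (p : ℝ) ^ (-2 : ℤ) := by
        rw [one_mul, ← zpow_natCast, ← zpow_add₀ (by exact_mod_cast hp.out.ne_zero)]
        ring_nf

theorem norm_mul_twoPowHarmonic_pred_add_le (hp2 : p ≠ 2) :
    ‖p * twoPowHarmonic ℚ_[p] (p - 1) + 2 * (2 ^ (p - 1) - 1)‖ ≤ (p : ℝ) ^ (-2 : ℤ) := by
  have hbin := congrArg (Int.cast (R := ℚ_[p]))
    (sum_range_neg_two_pow_mul_choose (hp.out.odd_of_ne_two hp2))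
  push_cast at hbin
  rw [twoPowHarmonic, ← hbin, mul_sum, ← sum_add_distrib]
  refine norm_sum_le_of_forall_le_of_nonneg (by positivity) fun i hi => ?_
  have hip : i + 1 < p := by simp at hi; omega
  have hchoose := congrArg (Nat.cast (R := ℚ_[p])) (Nat.add_one_mul_choose_eq (p - 1) i)
  rw [Nat.sub_add_cancel hp.out.one_le] at hchoose
  push_cast at hchoose
  have hterm : (p : ℚ_[p]) * (2 ^ (i + 1) / (i + 1)) + (-2) ^ (i + 1) * p.choose (i + 1)
      = p * (((2 ^ (i + 1) * (1 - (-1) ^ i * (p - 1).choose i) : ℤ) : ℚ_[p]) / (i + 1 : ℕ)) := by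
    have hi0 : (i + 1 : ℚ_[p]) ≠ 0 := by exact_mod_cast i.succ_ne_zero
    push_cast
    rw [neg_pow]
    field_simp
    linear_combination (-1 : ℚ_[p]) ^ i * hchoose
  rw [hterm, norm_mul, norm_p, ← zpow_neg_one, show (-2 : ℤ) = -1 + -1 by norm_num,
    zpow_add₀ (by exact_mod_cast hp.out.ne_zero)]
  refine mul_le_mul_of_nonneg_left (norm_intCast_div_natCast_le ?_ ?_) (by positivity)
  · refine Dvd.dvd.mul_left ?_ _
    rw [← dvd_neg, neg_sub]
    exact Int.prime_dvd_neg_one_pow_mul_choose_sub_one hp.out (by omega)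
  · exact fun h => absurd (Nat.le_of_dvd i.succ_pos h) (by omega)

theorem norm_two_pow_div_sub_le (t : ℕ) {k : ℕ} (hk : ¬ p ∣ k) :
    ‖(2 : ℚ_[p]) ^ (p * t + k) / (p * t + k : ℕ) - 2 ^ t * (2 ^ k / k)‖ ≤ (p : ℝ) ^ (-1 : ℤ) := by
  have hk0 : k ≠ 0 := by rintro rfl; exact hk (dvd_zero p)
  have hnd : ¬ p ∣ k * (p * t + k) := fun h => (hp.out.dvd_mul.mp h).elim hk
    fun h' => hk ((Nat.dvd_add_right (dvd_mul_right p t)).mp h')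
  have hdvd : (p : ℤ) ∣ 2 ^ k * (k * ((2 ^ t) ^ p - 2 ^ t) - 2 ^ t * p * t) :=
    Dvd.dvd.mul_left (dvd_sub (Dvd.dvd.mul_left (Int.prime_dvd_pow_self_sub hp.out _) _)
      ⟨2 ^ t * t, by ring⟩) _
  convert norm_intCast_div_natCast_le hdvd hnd using 2
  have hk' : (k : ℚ_[p]) ≠ 0 := by exact_mod_cast hk0
  have hpk : (p * t + k : ℚ_[p]) ≠ 0 := by exact_mod_cast (by omega : p * t + k ≠ 0)
  push_cast
  field_simp
  ring

theorem norm_sum_sub_mul_twoPowHarmonic_le (m : ℕ) :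
    ‖∑ t ∈ range m, ∑ r ∈ range (p - 1), (2 : ℚ_[p]) ^ (p * t + r + 1) / ((p * t + r : ℕ) + 1)
      - (∑ t ∈ range m, (2 : ℚ_[p]) ^ t) * twoPowHarmonic ℚ_[p] (p - 1)‖
      ≤ (p : ℝ) ^ (-1 : ℤ) := by
  rw [twoPowHarmonic, sum_mul, ← sum_sub_distrib]
  refine norm_sum_le_of_forall_le_of_nonneg (by positivity) fun t _ => ?_
  rw [mul_sum, ← sum_sub_distrib]
  refine norm_sum_le_of_forall_le_of_nonneg (by positivity) fun r hr => ?_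
  have hr : ¬ p ∣ r + 1 := fun h => by
    have := Nat.le_of_dvd r.succ_pos h
    simp at hr
    omega
  simpa [← add_assoc] using norm_two_pow_div_sub_le t hr

theorem norm_sum_two_pow_pow_div_sub_le (hp2 : p ≠ 2) (m : ℕ) :
    ‖∑ t ∈ range m, ((2 : ℚ_[p]) ^ p) ^ (t + 1) / (t + 1) - twoPowHarmonic ℚ_[p] m
      - (2 ^ (p - 1) - 1) * ∑ t ∈ range m, (2 : ℚ_[p]) ^ (t + 1)‖ ≤ (p : ℝ) ^ (-2 : ℤ) := by
  set y := (2 : ℚ_[p]) ^ (p - 1) - 1 with hy_def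
  have h2p : (2 : ℚ_[p]) ^ p = 2 * (1 + y) := by
    rw [hy_def, add_sub_cancel, ← pow_succ', Nat.sub_add_cancel hp.out.one_le]
  rw [twoPowHarmonic, mul_sum, ← sum_sub_distrib, ← sum_sub_distrib]
  refine norm_sum_le_of_forall_le_of_nonneg (by positivity) fun t _ => ?_
  have ht : ‖((t + 1 : ℕ) : ℚ_[p])‖ ≠ 0 := by
    rw [norm_ne_zero_iff]
    exact_mod_cast t.succ_ne_zero
  have hterm : (2 * (1 + y)) ^ (t + 1) / (t + 1) - 2 ^ (t + 1) / (t + 1) - y * 2 ^ (t + 1)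
      = 2 ^ (t + 1) * ((1 + y) ^ (t + 1) - 1 - (t + 1 : ℕ) * y) * ((t + 1 : ℕ) : ℚ_[p])⁻¹ := by
    have : (t + 1 : ℚ_[p]) ≠ 0 := by exact_mod_cast t.succ_ne_zero
    push_cast
    field_simp
    ring
  rw [h2p, hterm]
  calc _ ≤ 1 * (‖((t + 1 : ℕ) : ℚ_[p])‖ * (p : ℝ) ^ (-2 : ℤ)) * ‖((t + 1 : ℕ) : ℚ_[p])‖⁻¹ :=
        norm_mul_le_of_le (norm_mul_le_of_le (norm_two_pow_le_one _)
          (norm_one_add_pow_sub_le hp2 (norm_two_pow_pred_sub_one_le hp2) _)) (norm_inv _).le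
    _ = (p : ℝ) ^ (-2 : ℤ) := by field_simp

theorem norm_one_sub_two_pow_mul_le (hp2 : p ≠ 2) (m : ℕ) :
    ‖1 - (2 : ℚ_[p]) ^ ((p - 1) * m) * (1 - m * (2 ^ (p - 1) - 1))‖
      ≤ ‖(m : ℚ_[p])‖ * (p : ℝ) ^ (-2 : ℤ) := by
  set y := (2 : ℚ_[p]) ^ (p - 1) - 1 with hy_def
  have hy := norm_two_pow_pred_sub_one_le hp2
  have hm := norm_natCast_le_one ℚ_[p] m
  have hp0 : (0 : ℝ) ≤ (p : ℝ) ^ (-1 : ℤ) := by positivity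
  have hp1 : (p : ℝ) ^ (-1 : ℤ) ≤ 1 :=
    zpow_le_one_of_nonpos₀ (by exact_mod_cast hp.out.one_le) (by norm_num)
  have hmy : ‖(m : ℚ_[p]) * y‖ ≤ ‖(m : ℚ_[p])‖ * (p : ℝ) ^ (-1 : ℤ) :=
    norm_mul_le_of_le le_rfl hy
  have hid : 1 - (2 : ℚ_[p]) ^ ((p - 1) * m) * (1 - m * y)
      = (m * y) * (m * y) + ((1 + y) ^ m - 1 - m * y) * -(1 - m * y) := by
    rw [pow_mul, hy_def]
    ring
  rw [hid]
  refine norm_add_le_of_le ?_ ?_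
  · calc _ ≤ (‖(m : ℚ_[p])‖ * (p : ℝ) ^ (-1 : ℤ)) * (1 * (p : ℝ) ^ (-1 : ℤ)) :=
          norm_mul_le_of_le hmy (hmy.trans (by gcongr))
      _ = ‖(m : ℚ_[p])‖ * (p : ℝ) ^ (-2 : ℤ) := by
          rw [one_mul, mul_assoc, ← zpow_add₀ (by exact_mod_cast hp.out.ne_zero)]
          norm_num
  · calc _ ≤ (‖(m : ℚ_[p])‖ * (p : ℝ) ^ (-2 : ℤ)) * 1 := by
          refine norm_mul_le_of_le (norm_one_add_pow_sub_le hp2 hy m) ?_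
          rw [norm_neg, sub_eq_add_neg]
          exact norm_add_le_of_le norm_one.le
            (by rw [norm_neg]; exact hmy.trans (mul_le_one₀ hm hp0 hp1))
      _ = ‖(m : ℚ_[p])‖ * (p : ℝ) ^ (-2 : ℤ) := mul_one _

theorem norm_mul_twoPowHarmonic_mul_sub_le (hp2 : p ≠ 2) (m : ℕ)
    (hm : ‖(m : ℚ_[p])‖ * ‖twoPowHarmonic ℚ_[p] m‖ ≤ 1) :
    ‖p * twoPowHarmonic ℚ_[p] (p * m)
      - 2 ^ ((p - 1) * m) * (1 - m * (2 ^ (p - 1) - 1)) * twoPowHarmonic ℚ_[p] m‖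
      ≤ (p : ℝ) ^ (-2 : ℤ) := by
  set S := twoPowHarmonic ℚ_[p] (p - 1)
  set T := twoPowHarmonic ℚ_[p] m
  set G := ∑ t ∈ range m, (2 : ℚ_[p]) ^ t
  set A := ∑ t ∈ range m, ∑ r ∈ range (p - 1),
    (2 : ℚ_[p]) ^ (p * t + r + 1) / ((p * t + r : ℕ) + 1)
  set U := ∑ t ∈ range m, ((2 : ℚ_[p]) ^ p) ^ (t + 1) / (t + 1)
  set y := (2 : ℚ_[p]) ^ (p - 1) - 1
  set w := (2 : ℚ_[p]) ^ ((p - 1) * m)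
  have hG : ∑ t ∈ range m, (2 : ℚ_[p]) ^ (t + 1) = 2 * G := by
    simp only [G, mul_sum, pow_succ']
  have hp0 : (p : ℚ_[p]) ≠ 0 := by exact_mod_cast hp.out.ne_zero
  have hP0 : (p : ℝ) ≠ 0 := by exact_mod_cast hp.out.ne_zero
  have hid : p * twoPowHarmonic ℚ_[p] (p * m) - w * (1 - m * y) * T
      = (U - T - y * ∑ t ∈ range m, (2 : ℚ_[p]) ^ (t + 1))
        + (p * (A - G * S) + (G * (p * S + 2 * y) + (1 - w * (1 - m * y)) * T)) := by
    rw [twoPowHarmonic_mul ℚ_[p] hp.out.pos, hG, mul_add, ← mul_assoc, mul_inv_cancel₀ hp0]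
    ring
  rw [hid]
  refine norm_add_le_of_le (norm_sum_two_pow_pow_div_sub_le hp2 m)
    (norm_add_le_of_le ?_ (norm_add_le_of_le ?_ ?_))
  · calc _ ≤ (p : ℝ) ^ (-1 : ℤ) * (p : ℝ) ^ (-1 : ℤ) :=
          norm_mul_le_of_le (by rw [norm_p, zpow_neg_one]) (norm_sum_sub_mul_twoPowHarmonic_le m)
      _ = (p : ℝ) ^ (-2 : ℤ) := by rw [← zpow_add₀ hP0]; norm_num
  · have hG1 : ‖G‖ ≤ 1 := norm_sum_le_of_forall_le_of_nonneg zero_le_one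
      fun t _ => norm_two_pow_le_one t
    simpa using norm_mul_le_of_le hG1 (norm_mul_twoPowHarmonic_pred_add_le hp2)
  · calc _ ≤ ‖(m : ℚ_[p])‖ * (p : ℝ) ^ (-2 : ℤ) * ‖T‖ :=
          norm_mul_le_of_le (norm_one_sub_two_pow_mul_le hp2 m) le_rfl
      _ = (p : ℝ) ^ (-2 : ℤ) * (‖(m : ℚ_[p])‖ * ‖T‖) := by ring
      _ ≤ (p : ℝ) ^ (-2 : ℤ) := mul_le_of_le_one_right (by positivity) hm

theorem norm_f_pred_mul_sub_le (hp2 : p ≠ 2) {m : ℕ} (hm0 : 0 < m)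
    (hm : ‖(m : ℚ_[p])‖ * ‖twoPowHarmonic ℚ_[p] m‖ ≤ 1) :
    ‖((f (p * m - 1) - (1 - m * (2 ^ (p - 1) - 1)) * f (m - 1) : ℚ) : ℚ_[p])‖
      ≤ ‖(m : ℚ_[p])‖ * (p : ℝ) ^ (-2 : ℤ) := by
  have h2 : (2 : ℚ_[p]) ^ (p * m) = 2 ^ ((p - 1) * m) * 2 ^ m := by
    rw [← pow_add, ← add_one_mul, Nat.sub_add_cancel hp.out.one_le]
  have h2m : (2 : ℚ_[p]) ^ m ≠ 0 := pow_ne_zero _ two_ne_zero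
  have h2pm : (2 : ℚ_[p]) ^ ((p - 1) * m) ≠ 0 := pow_ne_zero _ two_ne_zero
  have hid : ((f (p * m - 1) - (1 - m * (2 ^ (p - 1) - 1)) * f (m - 1) : ℚ) : ℚ_[p])
      = m * ((2 : ℚ_[p]) ^ (p * m))⁻¹ * (p * twoPowHarmonic ℚ_[p] (p * m)
        - 2 ^ ((p - 1) * m) * (1 - m * (2 ^ (p - 1) - 1)) * twoPowHarmonic ℚ_[p] m) := by
    push_cast
    rw [cast_f_pred _ (Nat.mul_pos hp.out.pos hm0), cast_f_pred _ hm0, h2]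
    push_cast
    field_simp
  rw [hid, norm_mul, norm_mul, norm_inv, norm_two_pow hp2, inv_one, mul_one]
  exact mul_le_mul_of_nonneg_left (norm_mul_twoPowHarmonic_mul_sub_le hp2 m hm) (norm_nonneg _)

theorem norm_natCast_mul_pow_le (c e : ℕ) : ‖((c * p ^ e : ℕ) : ℚ_[p])‖ ≤ (p : ℝ) ^ (-e : ℤ) := by
  rw [Nat.cast_mul, Nat.cast_pow, norm_mul, norm_p_pow]
  exact mul_le_of_le_one_left (by positivity) (norm_natCast_le_one _ c)

theorem norm_natCast_mul_norm_twoPowHarmonic_le_one {c : ℕ} (hc : c < p) (e : ℕ) :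
    ‖((c * p ^ e : ℕ) : ℚ_[p])‖ * ‖twoPowHarmonic ℚ_[p] (c * p ^ e)‖ ≤ 1 := by
  have hT : ‖twoPowHarmonic ℚ_[p] (c * p ^ e)‖ ≤ (p : ℝ) ^ e := norm_twoPowHarmonic_le (by
    rw [pow_succ, mul_comm _ p]
    exact Nat.mul_lt_mul_of_pos_right hc (pow_pos hp.out.pos _))
  calc _ ≤ (p : ℝ) ^ (-e : ℤ) * (p : ℝ) ^ e :=
        mul_le_mul (norm_natCast_mul_pow_le c e) hT (norm_nonneg _) (by positivity)
    _ = 1 := by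
      rw [zpow_neg, zpow_natCast, inv_mul_cancel₀ (pow_pos (by exact_mod_cast hp.out.pos) e).ne']

theorem le_padicValRat_of_norm_le {q : ℚ} (hq : q ≠ 0) {n : ℤ}
    (h : ‖(q : ℚ_[p])‖ ≤ (p : ℝ) ^ (-n)) : n ≤ padicValRat p q := by
  rw [norm_eq_zpow_neg_valuation (by exact_mod_cast hq), valuation_ratCast] at h
  exact neg_le_neg_iff.mp ((zpow_le_zpow_iff_right₀ (by exact_mod_cast hp.out.one_lt)).mp h)

end Padic

theorem stmt_13 (p : ℕ) (hp : p.Prime) (hodd : Odd p) (e : ℕ) (he : 1 ≤ e)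
    (c : ℕ) (hc1 : 1 ≤ c) (hc2 : c ≤ p - 1) :
    (f (c * p ^ e - 1) - f (c * p ^ (e - 1) - 1)) -
        (c : ℚ) * (1 - 2 ^ (p - 1)) * (p : ℚ) ^ (e - 1) * f (c * p ^ (e - 1) - 1) = 0 ∨
    (e : ℤ) + 1 ≤ padicValRat p
      ((f (c * p ^ e - 1) - f (c * p ^ (e - 1) - 1)) -
        (c : ℚ) * (1 - 2 ^ (p - 1)) * (p : ℚ) ^ (e - 1) * f (c * p ^ (e - 1) - 1)) := by
  have : Fact p.Prime := ⟨hp⟩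
  have hp2 : p ≠ 2 := by rintro rfl; exact absurd hodd (by decide)
  set m := c * p ^ (e - 1) with hm
  have hpm : c * p ^ e = p * m := by
    rw [hm, mul_left_comm, ← pow_succ', Nat.sub_add_cancel he]
  have hD : (f (c * p ^ e - 1) - f (m - 1))
        - (c : ℚ) * (1 - 2 ^ (p - 1)) * (p : ℚ) ^ (e - 1) * f (m - 1)
      = f (p * m - 1) - (1 - m * (2 ^ (p - 1) - 1)) * f (m - 1) := by
    rw [hpm, hm]
    push_cast
    ring
  rw [hD]
  refine (eq_or_ne _ 0).imp id fun h0 => Padic.le_padicValRat_of_norm_le h0 ?_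
  calc _ ≤ ‖(m : ℚ_[p])‖ * (p : ℝ) ^ (-2 : ℤ) :=
        Padic.norm_f_pred_mul_sub_le hp2 (Nat.mul_pos hc1 (pow_pos hp.pos _))
          (Padic.norm_natCast_mul_norm_twoPowHarmonic_le_one (by omega) _)
    _ ≤ (p : ℝ) ^ (-(e - 1 : ℕ) : ℤ) * (p : ℝ) ^ (-2 : ℤ) :=
        mul_le_mul_of_nonneg_right (Padic.norm_natCast_mul_pow_le c _) (by positivity)
    _ = (p : ℝ) ^ (-((e : ℤ) + 1)) := by
        rw [← zpow_add₀ (by exact_mod_cast hp.ne_zero)]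
        push_cast [he]
        ring_nf
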